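/- arXiv:cs/0207022 — 2 statements merged into one kernel-verified Lean document; each statement's English description precedes it below -/
import Mathlib

section
/- With the lifted relation ⪰ on subsets of a finite linearly ordered set (D, ≥) defined by D' ⪰ D'' iff for every d'' ∈ D''\D' there exists d' ∈ D'\D'' with d' > d'': if D1 ⪰ D2, D2 ⪰ D3, D1 ⊄ D3 and D3 ⊄ D1 (neither is a subset of the other), then D1 ⪰ D3. -/
/-- The lifted priority relation on subsets of a linearly ordered set:
`D' ⪰ D''` iff every element of `D'' \ D'` is strictly exceeded by
some element of `D' \ D''`. -/
def Succeq {D : Type} [LinearOrder D] (D' D'' : Finset D) : Prop :=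
  ∀ d'' ∈ D'' \ D', ∃ d' ∈ D' \ D'', d'' < d'

theorem succeq_trans {D : Type} [LinearOrder D] [Fintype D] (D1 D2 D3 : Finset D)
    (h12 : Succeq D1 D2) (h23 : Succeq D2 D3)
    (h13 : ¬ D1 ⊆ D3) (h31 : ¬ D3 ⊆ D1) : Succeq D1 D3 := by
  classical
  obtain ⟨x, hx1, hx3⟩ := Finset.not_subset.mp h13
  set S : Finset D :=
    (D1 \ D3) ∪ (D3 \ D1) ∪ (D1 \ D2) ∪ (D2 \ D1) ∪ (D2 \ D3) ∪ (D3 \ D2) with hS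
  have hmemS : ∀ y : D,
      (y ∈ D1 \ D3 ∨ y ∈ D3 \ D1 ∨ y ∈ D1 \ D2 ∨ y ∈ D2 \ D1 ∨ y ∈ D2 \ D3 ∨
        y ∈ D3 \ D2) → y ∈ S := by
    intro y hy
    simp only [hS, Finset.mem_union]
    tauto
  have hne : S.Nonempty := ⟨x, hmemS x (Or.inl (Finset.mem_sdiff.mpr ⟨hx1, hx3⟩))⟩
  set M := S.max' hne with hM
  have hMS : M ∈ S := S.max'_mem hne
  have hle : ∀ y ∈ S, y ≤ M := fun y hy => S.le_max' y hy
  have h32 : M ∉ D3 \ D2 := by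
    intro h
    obtain ⟨e, he, hlt⟩ := h23 M h
    exact absurd (hle e (hmemS e (by tauto))) (not_le.mpr hlt)
  have h21 : M ∉ D2 \ D1 := by
    intro h
    obtain ⟨e, he, hlt⟩ := h12 M h
    exact absurd (hle e (hmemS e (by tauto))) (not_le.mpr hlt)
  -- so M ∈ D3 → M ∈ D2 and M ∈ D2 → M ∈ D1
  have himp3 : M ∈ D3 → M ∈ D1 := by
    intro h3
    have h2 : M ∈ D2 := by
      by_contra h2
      exact h32 (Finset.mem_sdiff.mpr ⟨h3, h2⟩)
    by_contra h1
    exact h21 (Finset.mem_sdiff.mpr ⟨h2, h1⟩)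
  have h2of3 : M ∈ D3 → M ∈ D2 := fun h3 => by
    by_contra h2; exact h32 (Finset.mem_sdiff.mpr ⟨h3, h2⟩)
  have h1of2 : M ∈ D2 → M ∈ D1 := fun h2 => by
    by_contra h1; exact h21 (Finset.mem_sdiff.mpr ⟨h2, h1⟩)
  have hM13 : M ∈ D1 \ D3 := by
    simp only [hS, Finset.mem_union, Finset.mem_sdiff] at hMS
    rw [Finset.mem_sdiff]
    tauto
  intro d hd
  refine ⟨M, hM13, ?_⟩
  have hdS : d ∈ S := hmemS d (by tauto)
  have : d ≤ M := hle d hdS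
  rcases this.lt_or_eq with h | h
  · exact h
  · exfalso
    rw [Finset.mem_sdiff] at hd hM13
    exact hd.2 (h ▸ hM13.1)
end

section
/- In the prisoner's-dilemma style game with profiles {(a,b),(a,¬b),(¬a,b),(¬a,¬b)} where agent 1's preference over profiles is determined by unreached desires from D1 = {⊤⇒(¬a∧b), ⊤⇒b, ⊤⇒¬(a∧¬b)} and agent 2's by D2 = {⊤⇒(a∧¬b), ⊤⇒a, ⊤⇒¬(¬a∧b)} (fewer unreached desires is better, compared by set inclusion), the unique Nash decision is (¬a,¬b), yet (a,b) is strictly better than (¬a,¬b) for both agents. -/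
/-- Consequents of agent 1's desire rules D1 = {⊤⇒(¬a∧b), ⊤⇒b, ⊤⇒¬(a∧¬b)}
evaluated at a profile (a,b). -/
def cons1 : Fin 3 → Bool × Bool → Prop
  | 0, δ => δ.1 = false ∧ δ.2 = true
  | 1, δ => δ.2 = true
  | 2, δ => ¬ (δ.1 = true ∧ δ.2 = false)

/-- Consequents of agent 2's desire rules D2 = {⊤⇒(a∧¬b), ⊤⇒a, ⊤⇒¬(¬a∧b)}. -/
def cons2 : Fin 3 → Bool × Bool → Prop
  | 0, δ => δ.1 = true ∧ δ.2 = false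
  | 1, δ => δ.1 = true
  | 2, δ => ¬ (δ.1 = false ∧ δ.2 = true)

/-- Unreached desires of agent 1 (all antecedents are ⊤). -/
def U1 (δ : Bool × Bool) : Set (Fin 3) := {k | ¬ cons1 k δ}

/-- Unreached desires of agent 2. -/
def U2 (δ : Bool × Bool) : Set (Fin 3) := {k | ¬ cons2 k δ}

/-- Agent 1 strictly prefers δ to δ': strictly fewer unreached desires. -/
def Pref1 (δ δ' : Bool × Bool) : Prop := U1 δ ⊂ U1 δ'

def Pref2 (δ δ' : Bool × Bool) : Prop := U2 δ ⊂ U2 δ'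

/-- Nash decision: no agent can strictly improve by unilateral deviation. -/
def Nash (δ : Bool × Bool) : Prop :=
  (¬ ∃ a' : Bool, Pref1 (a', δ.2) δ) ∧ (¬ ∃ b' : Bool, Pref2 (δ.1, b') δ)

instance dc1 : ∀ (k : Fin 3) (δ : Bool × Bool), Decidable (cons1 k δ)
  | 0, _ => instDecidableAnd
  | 1, _ => instDecidableEqBool _ _
  | 2, _ => instDecidableNot

instance dc2 : ∀ (k : Fin 3) (δ : Bool × Bool), Decidable (cons2 k δ)
  | 0, _ => instDecidableAnd
  | 1, _ => instDecidableEqBool _ _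
  | 2, _ => instDecidableNot

lemma pref1_iff (δ δ' : Bool × Bool) : Pref1 δ δ' ↔
    ((∀ k, ¬ cons1 k δ → ¬ cons1 k δ') ∧ ¬ (∀ k, ¬ cons1 k δ' → ¬ cons1 k δ)) := by
  simp [Pref1, U1, Set.ssubset_def, Set.subset_def, Set.mem_setOf_eq]

lemma pref2_iff (δ δ' : Bool × Bool) : Pref2 δ δ' ↔
    ((∀ k, ¬ cons2 k δ → ¬ cons2 k δ') ∧ ¬ (∀ k, ¬ cons2 k δ' → ¬ cons2 k δ)) := by
  simp [Pref2, U2, Set.ssubset_def, Set.subset_def, Set.mem_setOf_eq]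

theorem prisoners_dilemma :
    Nash (false, false) ∧
    (∀ δ : Bool × Bool, Nash δ → δ = (false, false)) ∧
    Pref1 (true, true) (false, false) ∧
    Pref2 (true, true) (false, false) := by
  simp only [Nash, pref1_iff, pref2_iff]
  decide
end
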